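/- arXiv:2303.12880 — 3 statements merged into one kernel-verified Lean document; each statement's English description precedes it below -/
import Mathlib

section
/- Let T be a truss, e, e' ∈ T and n ≥ 1. On Z^n_e(T) define f ∼_e g if and only if [f,g,h] ∈ B^n_e(T) for some (equivalently, every) h ∈ B^n_e(T), where the heap operation on functions is pointwise; the quotient heap is H^n_e(T) = Z^n_e(T)/∼_e. Then the map f ↦ σ∘f with σ(a) = [a,e,e'] descends to a well-defined bijection H^n_e(T) → H^n_{e'}(T) that preserves the induced heap operations; in particular H^n_e(T) and H^n_{e'}(T) are isomorphic as heaps. -/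
/-- A truss: an abelian heap with an associative multiplication distributing
over the ternary heap operation on both sides. -/
class Truss (T : Type*) extends Mul T where
  hbr : T → T → T → T
  hbr_assoc : ∀ a b c d f : T, hbr (hbr a b c) d f = hbr a b (hbr c d f)
  hbr_idl : ∀ a b : T, hbr a a b = b
  hbr_idr : ∀ a b : T, hbr b a a = b
  hbr_comm : ∀ a b c : T, hbr a b c = hbr c b a
  mul_assoc' : ∀ a b c : T, a * b * c = a * (b * c)
  mul_hbr_left : ∀ a b c d : T, a * hbr b c d = hbr (a * b) (a * c) (a * d)
  mul_hbr_right : ∀ a b c d : T, hbr b c d * a = hbr (b * a) (c * a) (d * a)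

open Truss

section Cochains

variable {T : Type*} [Truss T]

/-- Negation in the retract group `G(T;e)`. -/
def gneg (e x : T) : T := hbr e x e

/-- Addition in the retract group `G(T;e)`. -/
def gadd (e x y : T) : T := hbr x e y

/-- Sum of a list of elements in the retract group `G(T;e)`. -/
def gsum (e : T) : List T → T
  | [] => e
  | x :: xs => gadd e x (gsum e xs)

/-- `(-1)^k • x` in the retract group `G(T;e)`. -/
def spow (e : T) (k : ℕ) (x : T) : T := if k % 2 = 0 then x else gneg e x

/-- `n`-cochains on a truss `T`: functions `T^n → T`. -/
abbrev Cochain (T : Type*) (n : ℕ) := (Fin n → T) → T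

/-- A cochain belongs to `C^n(T)` when it is a heap homomorphism in each argument. -/
def IsMultiHeap {T : Type*} [Truss T] {n : ℕ} (f : Cochain T n) : Prop :=
  ∀ (i : Fin n) (a : Fin n → T) (x y z : T),
    f (Function.update a i (hbr x y z)) =
      hbr (f (Function.update a i x)) (f (Function.update a i y))
        (f (Function.update a i z))

/-- The argument tuple `(a_0, …, a_{i-1} a_i, …, a_n)` of the `i`-th inner face. -/
def faceArg {n : ℕ} (i : Fin n) (a : Fin (n + 1) → T) : Fin n → T :=
  fun j =>
    if (j : ℕ) < (i : ℕ) then a j.castSucc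
    else if j = i then a j.castSucc * a j.succ
    else a j.succ

/-- The `e`-relative Hochschild coboundary
`δ^n_e f(a_0,…,a_n) = -a_0 e + a_0 f(a_1,…,a_n) + Σ_{i=1}^n (-1)^i f(a_0,…,a_{i-1}a_i,…,a_n)
  + (-1)^{n+1} f(a_0,…,a_{n-1}) a_n + (-1)^n e a_n`,
with all operations in the retract group `G(T;e)`. -/
def delta (e : T) {n : ℕ} (f : Cochain T n) : Cochain T (n + 1) :=
  fun a =>
    gsum e
      ([gneg e (a 0 * e), a 0 * f (fun i => a i.succ)]
        ++ List.ofFn (fun i : Fin n => spow e ((i : ℕ) + 1) (f (faceArg i a)))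
        ++ [spow e (n + 1) (f (fun i => a i.castSucc) * a (Fin.last n)),
            spow e n (e * a (Fin.last n))])

end Cochains

/-- The set `Z^n_e(T)` of `e`-relative `n`-cocycles. -/
def Zset (T : Type*) [Truss T] (e : T) (n : ℕ) : Set (Cochain T n) :=
  {f | IsMultiHeap f ∧ ∀ a, delta e f a = e}

/-- The set `B^{n+1}_e(T)` of `e`-relative `(n+1)`-coboundaries. -/
def Bset (T : Type*) [Truss T] (e : T) (n : ℕ) : Set (Cochain T (n + 1)) :=
  {f | ∃ h : Cochain T n, IsMultiHeap h ∧ f = delta e h}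

/-- The relation `f ∼_e g` on `Z^{n+1}_e(T)`: `[f,g,h] ∈ B^{n+1}_e(T)` for some
`h ∈ B^{n+1}_e(T)` (pointwise heap operation). -/
def cohRel {T : Type*} [Truss T] (e : T) (n : ℕ)
    (f g : {f : Cochain T (n + 1) // f ∈ Zset T e (n + 1)}) : Prop :=
  ∃ h ∈ Bset T e n, (fun x => hbr (f.1 x) (g.1 x) (h x)) ∈ Bset T e n

/-- The `(n+1)`-st `e`-relative Hochschild cohomology heap `H^{n+1}_e(T) = Z/∼_e`. -/
def HH (T : Type*) [Truss T] (e : T) (n : ℕ) :=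
  Quot (cohRel (T := T) e n)

/-!
In the retract group `G(T;e)` the map `σ(a) = [a,e,e']` is translation by `e'`, and the
operations of `G(T;e')` are those of `G(T;e)` conjugated by it: `x +' y = x + y - e'` and
`-'x = 2e' - x`. Expanding `δ_{e'}(σ ∘ f)` in `G(T;e)`, distributivity turns `a(x + e')` into
`ax - ae + ae'`, and all the translation terms cancel except a single `e'`, whence
`δ_{e'}(σ ∘ f) = σ ∘ δ_e f`. So `σ ∘ -` maps cocycles to cocycles, coboundaries to coboundaries and,
being a heap automorphism of `T` with inverse `[-,e',e]`, induces a heap isomorphism on cohomology.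
-/

namespace Truss

variable {T : Type*}

/-- `T` with the retract group structure `G(T;e)`. -/
def Retract (_ : T) : Type _ := T

def toRetract (e : T) (x : T) : Retract e := x

lemma toRetract_injective (e : T) : Function.Injective (toRetract e) := fun _ _ h => h

instance (e : T) : Zero (Retract e) := ⟨toRetract e e⟩

@[simp] lemma toRetract_self (e : T) : toRetract e e = 0 := rfl

variable [Truss T]

instance (e : T) : Add (Retract e) := ⟨fun x y => toRetract e (hbr x e y)⟩
instance (e : T) : Neg (Retract e) := ⟨fun x => toRetract e (hbr e x e)⟩

instance (e : T) : AddCommGroup (Retract e) where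
  add_assoc x y z := hbr_assoc (T := T) x e y e z
  zero_add x := hbr_idl (T := T) e x
  add_zero x := hbr_idr (T := T) e x
  add_comm x y := hbr_comm (T := T) x e y
  neg_add_cancel := fun (x : T) => by
    change hbr (hbr e x e) e x = e
    rw [hbr_assoc, hbr_idl, hbr_comm, hbr_idl]
  nsmul := nsmulRec
  zsmul := zsmulRec

lemma toRetract_hbr (e x y z : T) :
    toRetract e (hbr x y z) = toRetract e x - toRetract e y + toRetract e z := by
  change hbr x y z = hbr (hbr x e (hbr e y e)) e z
  rw [hbr_assoc, hbr_assoc, hbr_idl, ← hbr_assoc, hbr_idr]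

lemma toRetract_gsum (e e' : T) (l : List T) :
    toRetract e (gsum e' l) =
      (l.map (toRetract e)).sum - l.length • toRetract e e' + toRetract e e' := by
  induction l with
  | nil => simp [gsum]
  | cons x l ih =>
    rw [gsum, gadd, toRetract_hbr, ih, List.map_cons, List.sum_cons, List.length_cons, succ_nsmul]
    abel

lemma toRetract_spow (e e' : T) (k : ℕ) (x : T) :
    toRetract e (spow e' k x) =
      (-1 : ℤ) ^ k • toRetract e x + (1 - (-1 : ℤ) ^ k) • toRetract e e' := by
  rcases Nat.even_or_odd k with hk | hk
  · rw [spow, if_pos (Nat.even_iff.mp hk), hk.neg_one_pow]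
    module
  · have hk' : k % 2 ≠ 0 := by rw [Nat.odd_iff.mp hk]; decide
    rw [spow, if_neg hk', hk.neg_one_pow, gneg, toRetract_hbr]
    module

/-- The translation `σ(a) = [a,e,e']`, i.e. `a ↦ a + e'` in `G(T;e)`. -/
def translate (e e' x : T) : T := hbr x e e'

lemma toRetract_translate (e e' x : T) :
    toRetract e (translate e e' x) = toRetract e x + toRetract e e' := by
  rw [translate, toRetract_hbr, toRetract_self, sub_zero]

lemma translate_hbr (e e' x y z : T) :
    translate e e' (hbr x y z) = hbr (translate e e' x) (translate e e' y) (translate e e' z) := by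
  apply toRetract_injective e
  simp only [toRetract_translate, toRetract_hbr]
  abel

lemma translate_translate (e e' x : T) : translate e' e (translate e e' x) = x := by
  apply toRetract_injective e
  rw [translate, toRetract_hbr, toRetract_translate, toRetract_self]
  abel

lemma toRetract_spow_translate (e e' : T) (k : ℕ) (x : T) :
    toRetract e (spow e' k (translate e e' x)) = toRetract e (spow e k x) + toRetract e e' := by
  rw [toRetract_spow, toRetract_spow, toRetract_translate, toRetract_self]
  module

lemma delta_comp_translate (e e' : T) {n : ℕ} (f : Cochain T n) :
    delta e' (translate e e' ∘ f) = translate e e' ∘ delta e f := by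
  funext a
  apply toRetract_injective e
  simp only [delta, Function.comp_apply, toRetract_translate, toRetract_gsum, List.map_append,
    List.sum_append, List.map_cons, List.sum_cons, List.map_nil, List.sum_nil, List.map_ofFn,
    List.sum_ofFn, List.length_append, List.length_cons, List.length_nil, List.length_ofFn,
    toRetract_spow_translate, Finset.sum_add_distrib, Finset.sum_const, Finset.card_univ,
    Fintype.card_fin]
  simp only [translate, mul_hbr_left, mul_hbr_right, toRetract_spow e e', toRetract_spow e e,
    gneg, toRetract_hbr, toRetract_self]
  module

lemma IsMultiHeap.translate_comp {n : ℕ} {f : Cochain T n} (hf : IsMultiHeap f) (e e' : T) :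
    IsMultiHeap (translate e e' ∘ f) := by
  intro i a x y z
  simp only [Function.comp_apply, hf i, translate_hbr]

lemma translate_comp_mem_Zset (e e' : T) {n : ℕ} {f : Cochain T n} (hf : f ∈ Zset T e n) :
    translate e e' ∘ f ∈ Zset T e' n := by
  refine ⟨hf.1.translate_comp e e', fun a => ?_⟩
  rw [delta_comp_translate, Function.comp_apply, hf.2 a, translate, hbr_idl]

lemma translate_comp_mem_Bset (e e' : T) {n : ℕ} {f : Cochain T (n + 1)} (hf : f ∈ Bset T e n) :
    translate e e' ∘ f ∈ Bset T e' n := by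
  obtain ⟨g, hg, rfl⟩ := hf
  exact ⟨translate e e' ∘ g, hg.translate_comp e e', (delta_comp_translate e e' g).symm⟩

def translateCocycle (e e' : T) (n : ℕ) (f : {f : Cochain T n // f ∈ Zset T e n}) :
    {f : Cochain T n // f ∈ Zset T e' n} :=
  ⟨translate e e' ∘ f.1, translate_comp_mem_Zset e e' f.2⟩

lemma cohRel.translateCocycle {e : T} {n : ℕ} {f g} (hfg : cohRel e n f g) (e' : T) :
    cohRel e' n (translateCocycle e e' (n + 1) f) (translateCocycle e e' (n + 1) g) := by
  obtain ⟨h, hB, hfgh⟩ := hfg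
  refine ⟨translate e e' ∘ h, translate_comp_mem_Bset e e' hB, ?_⟩
  convert translate_comp_mem_Bset e e' hfgh using 1
  funext x
  exact (translate_hbr e e' _ _ _).symm

def HH.translateEquiv (e e' : T) (n : ℕ) : HH T e n ≃ HH T e' n where
  toFun := Quot.map (translateCocycle e e' (n + 1)) fun _ _ h => h.translateCocycle e'
  invFun := Quot.map (translateCocycle e' e (n + 1)) fun _ _ h => h.translateCocycle e
  left_inv := Quot.ind fun f =>
    congrArg (Quot.mk _) (Subtype.ext (funext fun x => translate_translate e e' (f.1 x)))
  right_inv := Quot.ind fun f =>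
    congrArg (Quot.mk _) (Subtype.ext (funext fun x => translate_translate e' e (f.1 x)))

end Truss

/-- For a truss `T`, `e, e' ∈ T` and `n ≥ 1` (cochain level `n + 1`),
the map `f ↦ σ ∘ f`, `σ(a) = [a,e,e']`, descends to a well-defined bijection
`H^{n+1}_e(T) → H^{n+1}_{e'}(T)` preserving the induced heap operations; in particular
the cohomology heaps at `e` and `e'` are isomorphic. -/
theorem cohomology_translate_iso {T : Type*} [Truss T] (e e' : T) (n : ℕ) :
    ∃ Φ : HH T e n ≃ HH T e' n,
      (∀ (f : Cochain T (n + 1)) (hf : f ∈ Zset T e (n + 1))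
          (hf' : (fun x => hbr (f x) e e') ∈ Zset T e' (n + 1)),
        Φ (Quot.mk _ ⟨f, hf⟩) = Quot.mk _ ⟨fun x => hbr (f x) e e', hf'⟩) ∧
      (∀ (f g h w : {f : Cochain T (n + 1) // f ∈ Zset T e (n + 1)})
          (w' : {f : Cochain T (n + 1) // f ∈ Zset T e' (n + 1)}),
        (∀ x, w.1 x = hbr (f.1 x) (g.1 x) (h.1 x)) →
        (∀ x, w'.1 x = hbr (hbr (f.1 x) e e') (hbr (g.1 x) e e') (hbr (h.1 x) e e')) →
        Φ (Quot.mk _ w) = Quot.mk _ w') := by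
  refine ⟨HH.translateEquiv e e' n, fun f hf hf' => rfl, fun f g h w w' hw hw' => ?_⟩
  refine congrArg (Quot.mk _) (Subtype.ext (funext fun x => ?_))
  change translate e e' (w.1 x) = w'.1 x
  rw [hw x, hw' x, translate_hbr]
  rfl
end

section
/- Let T be a truss and N a Nijenhuis operator on T. Then (T, [−,−,−], ∘_N) is again a truss: the Nijenhuis product a ∘_N b = [N(a)b, N(ab), aN(b)] is associative and distributes over the heap operation on both sides. -/
open Truss

variable {T : Type*} [Truss T]

/-- The Nijenhuis product `a ∘_N b = [N(a)b, N(ab), aN(b)]`. -/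
def nijProd (N : T → T) (a b : T) : T :=
  hbr (N a * b) (N (a * b)) (a * N b)

namespace Truss

abbrev retract (e : T) : AddCommGroup T :=
  letI : Add T := ⟨fun a b => hbr a e b⟩
  letI : Zero T := ⟨e⟩
  letI : Neg T := ⟨fun a => hbr e a e⟩
  { add_assoc := fun a b c => hbr_assoc a e b e c
    zero_add := hbr_idl e
    add_zero := hbr_idr e
    add_comm := fun a b => hbr_comm a e b
    neg_add_cancel := fun a => by
      change hbr (hbr e a e) e a = e
      rw [hbr_assoc, hbr_idl, hbr_idr]
    nsmul := nsmulRec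
    zsmul := zsmulRec }

theorem retract_hbr (e a b c : T) :
    letI := retract e
    hbr a b c = a - b + c := by
  change hbr a b c = hbr (hbr a e (hbr e b e)) e c
  rw [← hbr_assoc a e e b e, hbr_idr, hbr_assoc, hbr_idl]

end Truss

section Nijenhuis

variable {N : T → T} (hN : ∀ a b c : T, N (hbr a b c) = hbr (N a) (N b) (N c))
include hN

theorem nijProd_hbr_left (w x y z : T) :
    nijProd N w (hbr x y z) = hbr (nijProd N w x) (nijProd N w y) (nijProd N w z) := by
  let := retract w
  -- Two passes: turning `hbr` into `a - b + c` first would block `hN` and `mul_hbr_left`.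
  simp only [nijProd, hN, mul_hbr_left]
  simp only [retract_hbr w]
  abel

theorem nijProd_hbr_right (w x y z : T) :
    nijProd N (hbr x y z) w = hbr (nijProd N x w) (nijProd N y w) (nijProd N z w) := by
  let := retract w
  simp only [nijProd, hN, mul_hbr_right]
  simp only [retract_hbr w]
  abel

theorem nijProd_assoc (hnij : ∀ a b : T, N (nijProd N a b) = N a * N b) (a b c : T) :
    nijProd N (nijProd N a b) c = nijProd N a (nijProd N b c) := by
  let := retract a
  have hab_c := hnij (a * b) c
  have ha_bc := hnij a (b * c)
  rw [nijProd.eq_1 N (nijProd N a b) c, nijProd.eq_1 N a (nijProd N b c), hnij, hnij]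
  simp only [nijProd, hN, mul_hbr_left, mul_hbr_right, mul_assoc'] at hab_c ha_bc ⊢
  simp only [retract_hbr a] at hab_c ha_bc ⊢
  rw [← hab_c, ← ha_bc]
  abel

end Nijenhuis

/-- Let `T` be a truss and `N` a Nijenhuis operator on `T`
(a heap endomorphism with `N(a ∘_N b) = N(a)N(b)`). Then `(T, [−,−,−], ∘_N)` is a
truss: the Nijenhuis product is associative and distributes over the heap
operation on both sides. -/
theorem nijenhuis_deformed_truss (T : Type*) [Truss T] (N : T → T)
    (hheap : ∀ a b c : T, N (hbr a b c) = hbr (N a) (N b) (N c))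
    (hnij : ∀ a b : T, N (nijProd N a b) = N a * N b) :
    (∀ a b c : T, nijProd N (nijProd N a b) c = nijProd N a (nijProd N b c)) ∧
    (∀ w x y z : T, nijProd N w (hbr x y z) =
      hbr (nijProd N w x) (nijProd N w y) (nijProd N w z)) ∧
    (∀ w x y z : T, nijProd N (hbr x y z) w =
      hbr (nijProd N x w) (nijProd N y w) (nijProd N z w)) :=
  ⟨nijProd_assoc hheap hnij, nijProd_hbr_left hheap, nijProd_hbr_right hheap⟩
end

section
/- Let T be a truss and N a Nijenhuis operator on T. Then for all k ∈ ℕ and a,b ∈ T: N^k(a)N(b) = [N(N^k(a)b), N^{k+1}(ab), N^k(aN(b))] and N(a)N^k(b) = [N(aN^k(b)), N^{k+1}(ab), N^k(N(a)b)], where N^k denotes the k-fold composite of N (N^0 = id). -/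
open Truss

variable {T : Type*} [Truss T]

/-- `N` is a heap endomorphism of the truss `T`. -/
def IsHeapEndo (N : T → T) : Prop :=
  ∀ a b c : T, N (hbr a b c) = hbr (N a) (N b) (N c)

/-- `N` is a Nijenhuis operator: a heap endomorphism with `N(a ∘_N b) = N(a)N(b)`. -/
def IsNijenhuis (N : T → T) : Prop :=
  IsHeapEndo N ∧ ∀ a b : T, N (nijProd N a b) = N a * N b

namespace Truss

theorem hbr_hbr_cancel_left (x y z w : T) : hbr x y (hbr y z w) = hbr x z w := by
  rw [← hbr_assoc, hbr_idr]

theorem hbr_hbr_cancel_right (x y z w : T) : hbr x y (hbr w z y) = hbr x z w := by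
  rw [hbr_comm w z y, hbr_hbr_cancel_left]

end Truss

theorem IsHeapEndo.iterate {N : T → T} (hN : IsHeapEndo N) (k : ℕ) : IsHeapEndo N^[k] := by
  induction k with
  | zero => intro a b c; rfl
  | succ k ih =>
    intro a b c
    simp only [Function.iterate_succ_apply', ih a b c]
    exact hN _ _ _

namespace IsNijenhuis

variable {N : T → T}

theorem mul_eq_hbr (hN : IsNijenhuis N) (a b : T) :
    N a * N b = hbr (N (N a * b)) (N (N (a * b))) (N (a * N b)) := by
  rw [← hN.2, nijProd, hN.1]

/- Induction on `k` with `a` replaced by `N a`: applying the heap endomorphism `N^[k]` to the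
`k = 1` identity for `N a * N b` produces a middle term that cancels against the hypothesis. -/
theorem iterate_apply_mul (hN : IsNijenhuis N) (k : ℕ) (a b : T) :
    N^[k] a * N b = hbr (N (N^[k] a * b)) (N^[k + 1] (a * b)) (N^[k] (a * N b)) := by
  induction k generalizing a with
  | zero => exact (hbr_idl _ _).symm
  | succ k ih =>
    simp only [Function.iterate_succ_apply] at ih ⊢
    rw [ih, hN.mul_eq_hbr, hN.1.iterate, hbr_hbr_cancel_left]

theorem mul_iterate_apply (hN : IsNijenhuis N) (k : ℕ) (a b : T) :
    N a * N^[k] b = hbr (N (a * N^[k] b)) (N^[k + 1] (a * b)) (N^[k] (N a * b)) := by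
  induction k generalizing b with
  | zero => exact (hbr_idl _ _).symm
  | succ k ih =>
    simp only [Function.iterate_succ_apply] at ih ⊢
    rw [ih, hN.mul_eq_hbr, hN.1.iterate, hbr_hbr_cancel_right]

end IsNijenhuis

/-- Let `N` be a Nijenhuis operator on a truss `T`. Then for all
`k ∈ ℕ` and `a, b ∈ T`:
`N^k(a)N(b) = [N(N^k(a)b), N^{k+1}(ab), N^k(aN(b))]` and
`N(a)N^k(b) = [N(aN^k(b)), N^{k+1}(ab), N^k(N(a)b)]`. -/
theorem iterate_nijenhuis_identities (T : Type*) [Truss T] (N : T → T)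
    (hN : IsNijenhuis N) (k : ℕ) :
    (∀ a b : T,
      N^[k] a * N b = hbr (N (N^[k] a * b)) (N^[k + 1] (a * b)) (N^[k] (a * N b))) ∧
    (∀ a b : T,
      N a * N^[k] b = hbr (N (a * N^[k] b)) (N^[k + 1] (a * b)) (N^[k] (N a * b))) :=
  ⟨hN.iterate_apply_mul k, hN.mul_iterate_apply k⟩
end
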